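/- arXiv:1807.01118 — 2 statements merged into one kernel-verified Lean document; each statement's English description precedes it below -/
import Mathlib

section
/- Fix $\varepsilon \in (0, e^{-2})$ and let $F_\varepsilon$ be the regularized entropy with $F_\varepsilon'' = 1/\lambda_\varepsilon$ and $F_\varepsilon'(1) = F_\varepsilon(1) = 0$. Then for all $s \geq 0$, $F_\varepsilon(s) \geq \frac{\varepsilon}{2} s^2 - 2$. -/
/-!
`Fε - (ε/2) s²` is convex because `λ_ε ≤ ε⁻¹`, so `Fε` lies above its tangent parabola
`Fε t + Fε' t (s - t) + (ε/2)(s - t)²` at any point `t`. Take `t = e`: since `e ≤ ε⁻¹`,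
on `[1, e]` the function `Fε` is the entropy `s log s - s + 1`, so `Fε e = Fε' e = 1`, and the
parabola at `e` exceeds `(ε/2) s² - 2` by `3 - e + (ε/2) e² + (1 - ε e) s > 0` for `s ≥ 0`.
-/

open Set Real

theorem ConvexOn.add_mul_sub_le_of_hasDerivAt {S : Set ℝ} {f : ℝ → ℝ} {f' x y : ℝ}
    (hfc : ConvexOn ℝ S f) (hx : x ∈ S) (hy : y ∈ S) (hf : HasDerivAt f f' x) :
    f x + f' * (y - x) ≤ f y := by
  rcases lt_trichotomy x y with hxy | rfl | hxy
  · have := hfc.le_slope_of_hasDerivAt hx hy hxy hf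
    rw [slope_def_field, le_div_iff₀ (sub_pos.2 hxy)] at this
    linarith
  · simp
  · have := hfc.slope_le_of_hasDerivAt hy hx hxy hf
    rw [slope_def_field, div_le_iff₀ (sub_pos.2 hxy)] at this
    linarith

theorem add_deriv_mul_sub_add_sq_le_of_le_deriv2 {f : ℝ → ℝ} {c : ℝ} (hf : ContDiff ℝ 2 f)
    (hc : ∀ x, c ≤ deriv (deriv f) x) (x y : ℝ) :
    f x + deriv f x * (y - x) + c / 2 * (y - x) ^ 2 ≤ f y := by
  have hf₁ : Differentiable ℝ f := hf.differentiable (by norm_num)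
  have hf₂ : Differentiable ℝ (deriv f) := (hf.iterate_deriv' 1 1).differentiable (by norm_num)
  have hg' : ∀ z, HasDerivAt (fun z => f z - c / 2 * (z - x) ^ 2) (deriv f z - c * (z - x)) z := by
    intro z
    refine ((hf₁ z).hasDerivAt.sub ((((hasDerivAt_id z).sub_const x).pow 2).const_mul (c / 2))
      ).congr_deriv ?_
    simp only [id]
    ring
  have hg'' : ∀ z, HasDerivAt (fun z => deriv f z - c * (z - x)) (deriv (deriv f) z - c) z := by
    intro z
    exact ((hf₂ z).hasDerivAt.sub (((hasDerivAt_id z).sub_const x).const_mul c)).congr_deriv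
      (by ring)
  have hconvex : ConvexOn ℝ univ (fun z => f z - c / 2 * (z - x) ^ 2) :=
    convexOn_of_hasDerivWithinAt2_nonneg convex_univ
      (fun z _ => (hg' z).continuousAt.continuousWithinAt)
      (fun z _ => (hg' z).hasDerivWithinAt) (fun z _ => (hg'' z).hasDerivWithinAt)
      (fun z _ => sub_nonneg.2 (hc z))
  linarith [hconvex.add_mul_sub_le_of_hasDerivAt (mem_univ x) (mem_univ y) (hg' x)]

theorem eqOn_Icc_of_hasDerivAt {f g f' : ℝ → ℝ} {a b : ℝ}
    (hf : ∀ x ∈ Icc a b, HasDerivAt f (f' x) x) (hg : ∀ x ∈ Icc a b, HasDerivAt g (f' x) x)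
    (ha : f a = g a) : EqOn f g (Icc a b) :=
  eq_of_has_deriv_right_eq (fun x hx => (hf x (Ico_subset_Icc_self hx)).hasDerivWithinAt)
    (fun x hx => (hg x (Ico_subset_Icc_self hx)).hasDerivWithinAt)
    (fun x hx => (hf x hx).continuousAt.continuousWithinAt)
    (fun x hx => (hg x hx).continuousAt.continuousWithinAt) ha

section EntropyOnIcc

variable {F : ℝ → ℝ} {b : ℝ}

theorem deriv_eqOn_log_of_deriv2_eq_inv (hF : ContDiff ℝ 2 F)
    (hF'' : ∀ x ∈ Icc 1 b, deriv (deriv F) x = x⁻¹) (hF'1 : deriv F 1 = 0) :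
    EqOn (deriv F) log (Icc 1 b) := by
  have hF₂ : Differentiable ℝ (deriv F) := (hF.iterate_deriv' 1 1).differentiable (by norm_num)
  refine eqOn_Icc_of_hasDerivAt (f' := fun x => x⁻¹) (fun x hx => ?_) (fun x hx => ?_)
    (by simp [hF'1])
  · exact hF'' x hx ▸ (hF₂ x).hasDerivAt
  · exact hasDerivAt_log (by linarith [hx.1])

theorem eqOn_mul_log_sub_add_one_of_deriv2_eq_inv (hF : ContDiff ℝ 2 F)
    (hF'' : ∀ x ∈ Icc 1 b, deriv (deriv F) x = x⁻¹) (hF'1 : deriv F 1 = 0) (hF1 : F 1 = 0) :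
    EqOn F (fun x => x * log x - x + 1) (Icc 1 b) := by
  have hF₁ : Differentiable ℝ F := hF.differentiable (by norm_num)
  refine eqOn_Icc_of_hasDerivAt (f' := log) (fun x hx => ?_) (fun x hx => ?_) (by simp [hF1])
  · exact deriv_eqOn_log_of_deriv2_eq_inv hF hF'' hF'1 hx ▸ (hF₁ x).hasDerivAt
  · have hx0 : x ≠ 0 := by linarith [hx.1]
    exact ((((hasDerivAt_id x).mul (hasDerivAt_log hx0)).sub (hasDerivAt_id x)).add_const 1
      ).congr_deriv (by field_simp; simp)

end EntropyOnIcc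

theorem le_inv_max_min_inv {ε : ℝ} (hε0 : 0 < ε) (hε1 : ε ≤ 1) (s : ℝ) :
    ε ≤ (max ε (min s ε⁻¹))⁻¹ := by
  have hεinv : ε ≤ ε⁻¹ := le_trans hε1 (one_le_inv₀ hε0 |>.2 hε1)
  rw [le_inv_comm₀ hε0 (hε0.trans_le (le_max_left _ _))]
  exact max_le hεinv (min_le_right _ _)

/-- Lower bound of the regularized entropy on `[0,∞)`: `F_ε(s) ≥ (ε/2)s² − 2`, for `ε < e⁻²`. -/
theorem reg_entropy_lower_bound_pos (ε : ℝ) (hε : ε ∈ Set.Ioo (0 : ℝ) (Real.exp (-2)))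
    (Fε : ℝ → ℝ) (hC2 : ContDiff ℝ 2 Fε)
    (hF'' : ∀ s : ℝ, deriv (deriv Fε) s = (max ε (min s ε⁻¹))⁻¹)
    (hF'1 : deriv Fε 1 = 0) (hF1 : Fε 1 = 0) :
    ∀ s : ℝ, 0 ≤ s → ε / 2 * s ^ 2 - 2 ≤ Fε s := by
  obtain ⟨hε0, hε2⟩ := hε
  have he : exp 1 ≤ ε⁻¹ := by
    rw [le_inv_comm₀ (exp_pos 1) hε0, ← exp_neg]
    exact hε2.le.trans (exp_le_exp.2 (by norm_num))
  have hε1 : ε ≤ 1 := hε2.le.trans (exp_le_one_iff.2 (by norm_num))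
  have hF''_eq : ∀ x ∈ Icc 1 (exp 1), deriv (deriv Fε) x = x⁻¹ := fun x hx => by
    rw [hF'' x, min_eq_left (hx.2.trans he), max_eq_right (hε1.trans hx.1)]
  have hF'e : deriv Fε (exp 1) = 1 := by
    simpa using deriv_eqOn_log_of_deriv2_eq_inv hC2 hF''_eq hF'1
      (right_mem_Icc.2 (one_le_exp zero_le_one))
  have hFe : Fε (exp 1) = 1 := by
    simpa using eqOn_mul_log_sub_add_one_of_deriv2_eq_inv hC2 hF''_eq hF'1 hF1
      (right_mem_Icc.2 (one_le_exp zero_le_one))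
  intro s hs
  have htangent := add_deriv_mul_sub_add_sq_le_of_le_deriv2 hC2
    (fun x => hF'' x ▸ le_inv_max_min_inv hε0 hε1 x) (exp 1) s
  have hεe : ε * exp 1 ≤ 1 := by
    simpa [hε0.ne'] using mul_le_mul_of_nonneg_left he hε0.le
  rw [hF'e, hFe] at htangent
  nlinarith [exp_one_lt_d9, mul_nonneg hs (sub_nonneg.2 hεe), sq_nonneg (exp 1)]
end

section
/- Fix $\varepsilon \in (0, e^{-2})$. If $F_\varepsilon$ is the regularized entropy (with $F''_\varepsilon = 1/\lambda_\varepsilon$, $F'_\varepsilon(1) = F_\varepsilon(1) = 0$), then $\frac{\varepsilon}{2} s^2 \leq F_\varepsilon(s) + 2$ for all $s \in \mathbb{R}$. -/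
/-!
Write `b = ε⁻¹`. Since `F_ε'' ≥ ε`, every tangent parabola
`F_ε a + F_ε' a (s - a) + (ε/2)(s - a)²` lies below `F_ε`. The parabola at `a = 1` gives
`F_ε s ≥ (ε/2)(s - 1)² ≥ (ε/2)s² - 1` for `s ≤ b`. On `[1, b]` we have `F_ε'' x = 1/x`, so
`F_ε' b = log b = -log ε > 2`, and the parabola at `a = b` then gives
`F_ε s ≥ (ε/2)s² + (F_ε' b - 1)(s - b) - 1` for `s ≥ b`.
-/

open Set Real

theorem ConvexOn.add_deriv_mul_sub_le {S : Set ℝ} {f : ℝ → ℝ} (hf : ConvexOn ℝ S f)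
    {a s : ℝ} (ha : a ∈ S) (hs : s ∈ S) (hfa : DifferentiableAt ℝ f a) :
    f a + deriv f a * (s - a) ≤ f s := by
  rcases lt_trichotomy a s with has | rfl | hsa
  · have := hf.deriv_le_slope ha hs has hfa
    rw [slope_def_field, le_div_iff₀ (sub_pos.2 has)] at this
    linarith
  · simp
  · have := hf.slope_le_deriv hs ha hsa hfa
    rw [slope_def_field, div_le_iff₀ (sub_pos.2 hsa)] at this
    linarith

theorem add_deriv_mul_sub_add_sq_le_of_le_deriv_deriv {g : ℝ → ℝ} {m : ℝ}
    (hg : Differentiable ℝ g) (hg' : Differentiable ℝ (deriv g))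
    (hm : ∀ x, m ≤ deriv (deriv g) x) (a s : ℝ) :
    g a + deriv g a * (s - a) + m / 2 * (s - a) ^ 2 ≤ g s := by
  set φ : ℝ → ℝ := fun x => g x - m / 2 * x ^ 2
  have hφ : ∀ x, HasDerivAt φ (deriv g x - m * x) x := fun x =>
    ((hg x).hasDerivAt.sub ((hasDerivAt_pow 2 x).const_mul (m / 2))).congr_deriv (by ring)
  have hφ' : deriv φ = fun x => deriv g x - m * x := funext fun x => (hφ x).deriv
  have hφ'_mono : Monotone (deriv φ) := by
    rw [hφ']
    refine monotone_of_hasDerivAt_nonneg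
      (fun x => (hg' x).hasDerivAt.sub ((hasDerivAt_id x).const_mul m)) fun x => ?_
    simpa using hm x
  have hφ_convex : ConvexOn ℝ univ φ :=
    hφ'_mono.convexOn_univ_of_deriv fun x => (hφ x).differentiableAt
  have := hφ_convex.add_deriv_mul_sub_le (mem_univ a) (mem_univ s) (hφ a).differentiableAt
  rw [hφ'] at this
  linear_combination this

theorem sub_eq_log_div_of_hasDerivAt_inv {g : ℝ → ℝ} {a b : ℝ} (ha : 0 < a) (hb : 0 < b)
    (hg : ∀ x ∈ uIcc a b, HasDerivAt g x⁻¹ x) : g b - g a = log (b / a) := by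
  rw [← integral_inv_of_pos ha hb]
  refine (intervalIntegral.integral_eq_sub_of_hasDerivAt hg ?_).symm
  refine intervalIntegral.intervalIntegrable_inv (fun x hx => ?_) continuousOn_id
  exact (lt_of_lt_of_le (lt_min ha hb) hx.1).ne'

/-- For `ε ∈ (0, e⁻²)`: `(ε/2)s² ≤ F_ε(s) + 2` for all real `s`. -/
theorem reg_entropy_global_lower_bound (ε : ℝ) (hε : ε ∈ Set.Ioo (0 : ℝ) (Real.exp (-2)))
    (Fε : ℝ → ℝ) (hC2 : ContDiff ℝ 2 Fε)
    (hF'' : ∀ s : ℝ, deriv (deriv Fε) s = (max ε (min s ε⁻¹))⁻¹)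
    (hF'1 : deriv Fε 1 = 0) (hF1 : Fε 1 = 0) :
    ∀ s : ℝ, ε / 2 * s ^ 2 ≤ Fε s + 2 := by
  obtain ⟨hε0, hεe⟩ := hε
  have hlog : 2 < -log ε := by linarith [log_exp (-2) ▸ log_lt_log hε0 hεe]
  have hε1 : ε < 1 := hεe.trans (exp_lt_one_iff.2 (by norm_num))
  have hinv1 : 1 ≤ ε⁻¹ := (one_le_inv₀ hε0).2 hε1.le
  have hεinv : ε * ε⁻¹ = 1 := mul_inv_cancel₀ hε0.ne'
  have hF' : Differentiable ℝ (deriv Fε) := hC2.differentiable_deriv_two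
  have hF''_ge : ∀ x, ε ≤ deriv (deriv Fε) x := fun x => by
    rw [hF'' x, le_inv_comm₀ hε0 (hε0.trans_le (le_max_left _ _))]
    exact max_le (by linarith) (min_le_right _ _)
  have hF_parabola :=
    add_deriv_mul_sub_add_sq_le_of_le_deriv_deriv (hC2.differentiable two_ne_zero) hF' hF''_ge
  have hF'_inv : deriv Fε ε⁻¹ = -log ε := by
    have := sub_eq_log_div_of_hasDerivAt_inv one_pos (inv_pos.2 hε0) fun x hx => by
      rw [uIcc_of_le hinv1] at hx
      have hx_clamp : max ε (min x ε⁻¹) = x := by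
        rw [min_eq_left hx.2, max_eq_right (by linarith [hx.1])]
      simpa [hF'' x, hx_clamp] using (hF' x).hasDerivAt
    rwa [hF'1, sub_zero, div_one, log_inv] at this
  intro s
  have h1 := hF_parabola 1 s
  rw [hF1, hF'1] at h1
  rcases le_or_gt s ε⁻¹ with hs | hs
  · nlinarith [mul_le_mul_of_nonneg_left hs hε0.le]
  · have h2 := hF_parabola ε⁻¹ s
    have h3 := hF_parabola 1 ε⁻¹
    rw [hF'_inv] at h2
    rw [hF1, hF'1] at h3
    nlinarith [mul_pos (by linarith : 0 < -log ε - 1) (sub_pos.2 hs)]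
end
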